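/- Let Ω ⊆ ℝ^d be open and bounded, p ∈ (1,∞), x_1,…,x_n ∈ Ω distinct, σ = (1/n) Σ_{i=1}^n δ_{x_i}, h ∈ L^p(σ; ℝ^m), and let (μ,f) ∈ TL^p with μ = (1/n) Σ_{j=1}^n δ_{y_j}, y_1,…,y_n ∈ Ω distinct. Then there exists an optimal TL^p transport map T^μ : {x_1,…,x_n} → {y_1,…,y_n} with T^μ_*σ = μ achieving d_TLp^p((σ,h),(μ,f)) = (1/n) Σ_{j=1}^n ( |x_j − T^μ(x_j)|_p^p + |h(x_j) − f(T^μ(x_j))|_p^p ); and defining the embedding [P̃((μ,f))]_j = ( (T^μ(x_j) − x_j) n^{−1/p}, (f(T^μ(x_j)) − h(x_j)) n^{−1/p} ) ∈ ℝ^{d+m}, one has P̃((σ,h)) = 0 (taking T^σ = Id) and |P̃((σ,h)) − P̃((μ,f))|_p = d_TLp((σ,h),(μ,f)). -/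

import Mathlib

open MeasureTheory Filter Topology

/-- `∑ i, |v i|^p`, the p-th power of the ℓ^p norm on ℝ^k. -/
noncomputable def lpPow (p : ℝ) {k : ℕ} (v : Fin k → ℝ) : ℝ := ∑ i, |v i| ^ p

/-- `π` is a coupling (transport plan) between `μ` and `ν`. -/
def IsCoupling {α β : Type*} [MeasurableSpace α] [MeasurableSpace β]
    (π : Measure (α × β)) (μ : Measure α) (ν : Measure β) : Prop :=
  π.map Prod.fst = μ ∧ π.map Prod.snd = ν

/-- The Kantorovich optimal transport cost for a cost function `c`. -/
noncomputable def OTCost {α β : Type*} [MeasurableSpace α] [MeasurableSpace β]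
    (c : α → β → ℝ) (μ : Measure α) (ν : Measure β) : ℝ :=
  ⨅ π : {π : Measure (α × β) // IsCoupling π μ ν},
    ∫ z, c z.1 z.2 ∂(π : Measure (α × β))

/-- The TL^p distance between `(μ, f)` and `(ν, g)`. -/
noncomputable def dTLp (p : ℝ) {d m : ℕ} (μ ν : Measure (Fin d → ℝ))
    (f g : (Fin d → ℝ) → Fin m → ℝ) : ℝ :=
  (OTCost (fun x y => lpPow p (x - y) + lpPow p (f x - g y)) μ ν) ^ (1 / p)

/-- The uniform discrete (empirical) measure `(1/n) ∑ᵢ δ_{x i}`. -/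
noncomputable def uniformOn {d n : ℕ} (x : Fin n → (Fin d → ℝ)) : Measure (Fin d → ℝ) :=
  (n : ENNReal)⁻¹ • ∑ i, Measure.dirac (x i)

/-- The linear TL^p embedding built from the values `T j = T^μ(x_j)` of a transport map
and the values `F j = f(T^μ(x_j))`: each block of `P̃((μ,f))` in `ℝ^{d+m}` is
`((T^μ(x_j) − x_j) n^{−1/p}, (f(T^μ(x_j)) − h(x_j)) n^{−1/p})`. -/
noncomputable def tlpEmbed (p : ℝ) {d m n : ℕ} (x : Fin n → (Fin d → ℝ))
    (h : (Fin d → ℝ) → Fin m → ℝ) (T : Fin n → (Fin d → ℝ)) (F : Fin n → Fin m → ℝ) :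
    Fin n → (Fin d → ℝ) × (Fin m → ℝ) :=
  fun j => (((n : ℝ) ^ (-(1 / p))) • (T j - x j), ((n : ℝ) ^ (-(1 / p))) • (F j - h (x j)))

/-- The Euclidean ℓ^p norm of a block vector with blocks in `ℝ^{d+m} ≅ ℝ^d × ℝ^m`. -/
noncomputable def blockNormTLp (p : ℝ) {d m n : ℕ}
    (z : Fin n → (Fin d → ℝ) × (Fin m → ℝ)) : ℝ :=
  (∑ j, (lpPow p (z j).1 + lpPow p (z j).2)) ^ (1 / p)

/-
A coupling of the uniform measures on `n` distinct points `x i` and `n` distinct points `y j`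
is a sum of point masses at the pairs `(x i, y j)`, and `n` times its weights form a doubly
stochastic matrix. The transport cost is linear in that matrix, so by Birkhoff–von Neumann it is
minimised at a permutation matrix: some permutation coupling is optimal. The isometry of the
embedding then reduces to `(n ^ (-1/p)) ^ p = 1/n`.
-/

theorem Matrix.exists_perm_sum_le_of_mem_doublyStochastic {ι : Type*} [Fintype ι] [DecidableEq ι]
    {M : Matrix ι ι ℝ} (hM : M ∈ doublyStochastic ℝ ι) (C : Matrix ι ι ℝ) :
    ∃ σ : Equiv.Perm ι, ∑ i, C i (σ i) ≤ ∑ i, ∑ j, M i j * C i j := by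
  let L : Matrix ι ι ℝ →ₗ[ℝ] ℝ := ∑ i, ∑ j, C i j • entryLinearMap ℝ ℝ i j
  have hL : ∀ N, L N = ∑ i, ∑ j, N i j * C i j := fun N => by
    simp [L, LinearMap.sum_apply, mul_comm]
  rw [← SetLike.mem_coe, doublyStochastic_eq_convexHull_permMatrix] at hM
  obtain ⟨_, ⟨σ, rfl⟩, hσ⟩ :=
    (L.concaveOn convex_univ).exists_le_of_mem_convexHull (Set.subset_univ _) hM
  refine ⟨σ, ?_⟩
  calc ∑ i, C i (σ i) = L (σ.permMatrix ℝ) := by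
        simp [hL, PEquiv.toMatrix_apply, Equiv.toPEquiv_apply, eq_comm]
    _ ≤ L M := hσ
    _ = _ := hL M

theorem IsCoupling.ae_mem_prod {α β : Type*} [MeasurableSpace α] [MeasurableSpace β]
    {π : Measure (α × β)} {μ : Measure α} {ν : Measure β} (hπ : IsCoupling π μ ν)
    {s : Set α} {t : Set β} (hs : ∀ᵐ a ∂μ, a ∈ s) (ht : ∀ᵐ b ∂ν, b ∈ t) : ∀ᵐ z ∂π, z ∈ s ×ˢ t := by
  rw [← hπ.1] at hs
  rw [← hπ.2] at ht
  filter_upwards [ae_of_ae_map measurable_fst.aemeasurable hs,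
    ae_of_ae_map measurable_snd.aemeasurable ht] with z hz₁ hz₂
  exact ⟨hz₁, hz₂⟩

theorem MeasureTheory.Measure.eq_sum_smul_dirac_of_ae_mem_range {α ι : Type*}
    [MeasurableSpace α] [MeasurableSingletonClass α] [Countable ι] {μ : Measure α}
    {z : ι → α} (hz : Function.Injective z) (hμ : ∀ᵐ a ∂μ, a ∈ Set.range z) :
    μ = Measure.sum fun i => μ {z i} • Measure.dirac (z i) := by
  calc μ = μ.restrict (⋃ i, {z i}) := by
        rw [Set.iUnion_singleton_eq_range, Measure.restrict_eq_self_of_ae_mem hμ]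
    _ = _ := by
        rw [Measure.restrict_iUnion _ fun _ => measurableSet_singleton _]
        · simp only [Measure.restrict_singleton]
        · exact fun i j hij => Set.disjoint_singleton.2 (hz.ne hij)

section Discrete

variable {d n : ℕ}

theorem uniformOn_eq_sum (x : Fin n → (Fin d → ℝ)) :
    uniformOn x = Measure.sum fun i => (n : ENNReal)⁻¹ • Measure.dirac (x i) := by
  rw [Measure.sum_fintype, uniformOn, Finset.smul_sum]

theorem uniformOn_comp_perm (x : Fin n → (Fin d → ℝ)) (σ : Equiv.Perm (Fin n)) :
    uniformOn (fun i => x (σ i)) = uniformOn x := by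
  rw [uniformOn, uniformOn, Equiv.sum_comp σ fun i => Measure.dirac (x i)]

theorem ae_mem_range_uniformOn (x : Fin n → (Fin d → ℝ)) :
    ∀ᵐ a ∂uniformOn x, a ∈ Set.range x := by
  rw [uniformOn_eq_sum, Measure.ae_sum_iff]
  exact fun i => Measure.ae_smul_measure
    ((ae_dirac_iff (Set.finite_range x).measurableSet).2 (Set.mem_range_self i)) _

theorem uniformOn_singleton {x : Fin n → (Fin d → ℝ)} (hx : Function.Injective x) (i : Fin n) :
    uniformOn x {x i} = (n : ENNReal)⁻¹ := by
  simp [uniformOn_eq_sum, Pi.single_apply, hx.eq_iff]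

section Coupling

variable {x y : Fin n → (Fin d → ℝ)}

theorem IsCoupling.exists_eq_sum_smul_dirac (hx : Function.Injective x)
    (hy : Function.Injective y) {π : Measure ((Fin d → ℝ) × (Fin d → ℝ))}
    (hπ : IsCoupling π (uniformOn x) (uniformOn y)) :
    ∃ w : Fin n × Fin n → ENNReal,
      π = Measure.sum fun ij => w ij • Measure.dirac (Prod.map x y ij) :=
  ⟨_, Measure.eq_sum_smul_dirac_of_ae_mem_range (hx.prodMap hy) <| by
    rw [Set.range_prodMap]
    exact hπ.ae_mem_prod (ae_mem_range_uniformOn x) (ae_mem_range_uniformOn y)⟩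

theorem map_fst_sum_smul_dirac_prodMap_singleton (hx : Function.Injective x)
    (w : Fin n × Fin n → ENNReal) (i : Fin n) :
    (Measure.sum fun ij => w ij • Measure.dirac (Prod.map x y ij)).map Prod.fst {x i}
      = ∑ j, w (i, j) := by
  rw [Measure.map_apply measurable_fst (measurableSet_singleton _),
    Measure.sum_apply _ (measurable_fst (measurableSet_singleton _))]
  simp [tsum_fintype, Fintype.sum_prod_type_right, Set.indicator, hx.eq_iff]

theorem map_snd_sum_smul_dirac_prodMap_singleton (hy : Function.Injective y)
    (w : Fin n × Fin n → ENNReal) (j : Fin n) :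
    (Measure.sum fun ij => w ij • Measure.dirac (Prod.map x y ij)).map Prod.snd {y j}
      = ∑ i, w (i, j) := by
  rw [Measure.map_apply measurable_snd (measurableSet_singleton _),
    Measure.sum_apply _ (measurable_snd (measurableSet_singleton _))]
  simp [tsum_fintype, Fintype.sum_prod_type, Set.indicator, hy.eq_iff]

theorem integral_sum_smul_dirac_prodMap {w : Fin n × Fin n → ENNReal} (hw : ∀ ij, w ij ≠ ⊤)
    (g : (Fin d → ℝ) × (Fin d → ℝ) → ℝ) :
    ∫ z, g z ∂(Measure.sum fun ij => w ij • Measure.dirac (Prod.map x y ij))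
      = ∑ i, ∑ j, (w (i, j)).toReal * g (x i, y j) := by
  rw [integral_sum_dirac hw, tsum_fintype, Fintype.sum_prod_type]
  rfl

theorem IsCoupling.exists_perm_le_integral (hn : 0 < n) (hx : Function.Injective x)
    (hy : Function.Injective y) {π : Measure ((Fin d → ℝ) × (Fin d → ℝ))}
    (hπ : IsCoupling π (uniformOn x) (uniformOn y)) (c : (Fin d → ℝ) → (Fin d → ℝ) → ℝ) :
    ∃ σ : Equiv.Perm (Fin n), (n : ℝ)⁻¹ * ∑ i, c (x i) (y (σ i)) ≤ ∫ z, c z.1 z.2 ∂π := by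
  obtain ⟨w, rfl⟩ := hπ.exists_eq_sum_smul_dirac hx hy
  have hrow : ∀ i, ∑ j, w (i, j) = (n : ENNReal)⁻¹ := fun i => by
    rw [← map_fst_sum_smul_dirac_prodMap_singleton hx, hπ.1, uniformOn_singleton hx]
  have hcol : ∀ j, ∑ i, w (i, j) = (n : ENNReal)⁻¹ := fun j => by
    rw [← map_snd_sum_smul_dirac_prodMap_singleton hy, hπ.2, uniformOn_singleton hy]
  have hw : ∀ ij, w ij ≠ ⊤ := fun ⟨i, j⟩ =>
    ne_top_of_le_ne_top (by simpa using hn.ne' : (n : ENNReal)⁻¹ ≠ ⊤) <| hrow i ▸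
      Finset.single_le_sum (f := fun j => w (i, j)) (fun _ _ => zero_le) (Finset.mem_univ j)
  have hn' : (n : ℝ) ≠ 0 := by positivity
  set M : Matrix (Fin n) (Fin n) ℝ := Matrix.of fun i j => n * (w (i, j)).toReal
  have hM : M ∈ doublyStochastic ℝ (Fin n) := by
    have hsum : ∀ s : Fin n → ENNReal, (∀ k, s k ≠ ⊤) → ∑ k, s k = (n : ENNReal)⁻¹ →
        ∑ k, (n : ℝ) * (s k).toReal = 1 := fun s hs h => by
      rw [← Finset.mul_sum, ← ENNReal.toReal_sum fun k _ => hs k, h, ENNReal.toReal_inv,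
        ENNReal.toReal_natCast, mul_inv_cancel₀ hn']
    exact mem_doublyStochastic_iff_sum.2 ⟨fun i j => mul_nonneg n.cast_nonneg ENNReal.toReal_nonneg,
      fun i => hsum _ (fun j => hw _) (hrow i), fun j => hsum _ (fun i => hw _) (hcol j)⟩
  obtain ⟨σ, hσ⟩ := Matrix.exists_perm_sum_le_of_mem_doublyStochastic hM fun i j => c (x i) (y j)
  refine ⟨σ, ?_⟩
  calc (n : ℝ)⁻¹ * ∑ i, c (x i) (y (σ i)) ≤ (n : ℝ)⁻¹ * ∑ i, ∑ j, M i j * c (x i) (y j) := by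
        gcongr
    _ = _ := by
        simp only [integral_sum_smul_dirac_prodMap hw, M, Matrix.of_apply, Finset.mul_sum,
          ← mul_assoc, inv_mul_cancel₀ hn', one_mul]

end Coupling

noncomputable def permCoupling (x y : Fin n → (Fin d → ℝ)) (σ : Equiv.Perm (Fin n)) :
    Measure ((Fin d → ℝ) × (Fin d → ℝ)) :=
  Measure.sum fun i => (n : ENNReal)⁻¹ • Measure.dirac (x i, y (σ i))

theorem isCoupling_permCoupling (x y : Fin n → (Fin d → ℝ)) (σ : Equiv.Perm (Fin n)) :
    IsCoupling (permCoupling x y σ) (uniformOn x) (uniformOn y) := by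
  constructor
  · rw [permCoupling, Measure.map_sum measurable_fst.aemeasurable, uniformOn_eq_sum]
    simp [Measure.map_smul, Measure.map_dirac' measurable_fst]
  · rw [permCoupling, Measure.map_sum measurable_snd.aemeasurable, ← uniformOn_comp_perm y σ,
      uniformOn_eq_sum]
    simp [Measure.map_smul, Measure.map_dirac' measurable_snd]

theorem integral_permCoupling (x y : Fin n → (Fin d → ℝ)) (σ : Equiv.Perm (Fin n))
    (c : (Fin d → ℝ) → (Fin d → ℝ) → ℝ) :
    ∫ z, c z.1 z.2 ∂permCoupling x y σ = (n : ℝ)⁻¹ * ∑ i, c (x i) (y (σ i)) := by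
  rw [permCoupling, integral_sum_dirac fun i => by simpa using (Fin.pos i).ne', tsum_fintype,
    Finset.mul_sum]
  simp

theorem exists_perm_OTCost_uniformOn_eq (hn : 0 < n) {x y : Fin n → (Fin d → ℝ)}
    (hx : Function.Injective x) (hy : Function.Injective y)
    (c : (Fin d → ℝ) → (Fin d → ℝ) → ℝ) :
    ∃ σ : Equiv.Perm (Fin n),
      OTCost c (uniformOn x) (uniformOn y) = (n : ℝ)⁻¹ * ∑ i, c (x i) (y (σ i)) := by
  obtain ⟨σ₀, hσ₀⟩ := Finite.exists_min fun σ : Equiv.Perm (Fin n) => ∑ i, c (x i) (y (σ i))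
  refine ⟨σ₀, IsLeast.csInf_eq ⟨⟨⟨_, isCoupling_permCoupling x y σ₀⟩,
    integral_permCoupling x y σ₀ c⟩, ?_⟩⟩
  rintro _ ⟨⟨π, hπ⟩, rfl⟩
  obtain ⟨σ, hσ⟩ := hπ.exists_perm_le_integral hn hx hy c
  exact le_trans (mul_le_mul_of_nonneg_left (hσ₀ σ) (by positivity)) hσ

section Embedding

variable {p : ℝ} {d m n : ℕ}

theorem lpPow_nonneg {k : ℕ} (v : Fin k → ℝ) : 0 ≤ lpPow p v :=
  Finset.sum_nonneg fun _ _ => Real.rpow_nonneg (abs_nonneg _) p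

theorem lpPow_smul {k : ℕ} {a : ℝ} (ha : 0 ≤ a) (v : Fin k → ℝ) :
    lpPow p (a • v) = a ^ p * lpPow p v := by
  simp only [lpPow, Finset.mul_sum, Pi.smul_apply, smul_eq_mul, abs_mul, abs_of_nonneg ha,
    Real.mul_rpow ha (abs_nonneg _)]

theorem tlpEmbed_self (x : Fin n → (Fin d → ℝ)) (h : (Fin d → ℝ) → Fin m → ℝ) :
    tlpEmbed p x h x (fun j => h (x j)) = 0 := by
  funext j
  simp [tlpEmbed]

theorem blockNormTLp_tlpEmbed_self_sub (hp : p ≠ 0) (x : Fin n → (Fin d → ℝ))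
    (h : (Fin d → ℝ) → Fin m → ℝ) (T : Fin n → (Fin d → ℝ)) (F : Fin n → Fin m → ℝ) :
    blockNormTLp p (tlpEmbed p x h x (fun j => h (x j)) - tlpEmbed p x h T F)
      = ((n : ℝ)⁻¹ * ∑ j, (lpPow p (x j - T j) + lpPow p (h (x j) - F j))) ^ (1 / p) := by
  have hscale : ((n : ℝ) ^ (-(1 / p))) ^ p = (n : ℝ)⁻¹ := by
    rw [← Real.rpow_mul n.cast_nonneg, neg_mul, one_div, inv_mul_cancel₀ hp, Real.rpow_neg_one]
  have hnonneg : 0 ≤ (n : ℝ) ^ (-(1 / p)) := by positivity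
  simp only [blockNormTLp, tlpEmbed, Pi.sub_apply, Prod.mk_sub_mk, ← smul_sub,
    sub_sub_sub_cancel_right, lpPow_smul hnonneg, hscale, ← mul_add, Finset.mul_sum]

end Embedding

theorem linear_tlp_discrete_general {d m : ℕ} (p : ℝ) (hp1 : 1 < p)
    (n : ℕ) (hn : 0 < n) (x y : Fin n → (Fin d → ℝ))
    (hx : Function.Injective x) (hy : Function.Injective y)
    (h f : (Fin d → ℝ) → Fin m → ℝ) :
    ∃ σperm : Equiv.Perm (Fin n),
      uniformOn (fun j => y (σperm j)) = uniformOn y ∧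
      dTLp p (uniformOn x) (uniformOn y) h f ^ p
        = (1 / (n : ℝ)) * ∑ j,
            (lpPow p (x j - y (σperm j)) + lpPow p (h (x j) - f (y (σperm j)))) ∧
      tlpEmbed p x h x (fun j => h (x j)) = 0 ∧
      blockNormTLp p
          (tlpEmbed p x h x (fun j => h (x j))
            - tlpEmbed p x h (fun j => y (σperm j)) (fun j => f (y (σperm j))))
        = dTLp p (uniformOn x) (uniformOn y) h f := by
  have hp : p ≠ 0 := (zero_lt_one.trans hp1).ne'
  obtain ⟨σ, hσ⟩ := exists_perm_OTCost_uniformOn_eq hn hx hy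
    fun a b => lpPow p (a - b) + lpPow p (h a - f b)
  have hcost_nonneg : 0 ≤ (n : ℝ)⁻¹ *
      ∑ j, (lpPow p (x j - y (σ j)) + lpPow p (h (x j) - f (y (σ j)))) :=
    mul_nonneg (inv_nonneg.2 n.cast_nonneg)
      (Finset.sum_nonneg fun _ _ => add_nonneg (lpPow_nonneg _) (lpPow_nonneg _))
  refine ⟨σ, uniformOn_comp_perm y σ, ?_, tlpEmbed_self x h, ?_⟩
  · rw [dTLp, hσ, one_div, one_div, Real.rpow_inv_rpow hcost_nonneg hp]
  · rw [blockNormTLp_tlpEmbed_self_sub hp, dTLp, hσ]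

/-- for uniform discrete measures on `n` distinct points an optimal TL^p
transport map (a permutation) exists, and the linear TL^p embedding `P̃` satisfies
`P̃((σ,h)) = 0` and `|P̃((σ,h)) − P̃((μ,f))|_p = d_TLp((σ,h),(μ,f))`. -/
theorem linear_tlp_discrete {d m : ℕ} (Ω : Set (Fin d → ℝ)) (hΩo : IsOpen Ω)
    (hΩb : Bornology.IsBounded Ω) (p : ℝ) (hp1 : 1 < p)
    (n : ℕ) (hn : 0 < n) (x y : Fin n → (Fin d → ℝ))
    (hxΩ : ∀ i, x i ∈ Ω) (hyΩ : ∀ j, y j ∈ Ω)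
    (hx : Function.Injective x) (hy : Function.Injective y)
    (h f : (Fin d → ℝ) → Fin m → ℝ) :
    ∃ σperm : Equiv.Perm (Fin n),
      uniformOn (fun j => y (σperm j)) = uniformOn y ∧
      dTLp p (uniformOn x) (uniformOn y) h f ^ p
        = (1 / (n : ℝ)) * ∑ j,
            (lpPow p (x j - y (σperm j)) + lpPow p (h (x j) - f (y (σperm j)))) ∧
      tlpEmbed p x h x (fun j => h (x j)) = 0 ∧
      blockNormTLp p
          (tlpEmbed p x h x (fun j => h (x j))
            - tlpEmbed p x h (fun j => y (σperm j)) (fun j => f (y (σperm j))))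
        = dTLp p (uniformOn x) (uniformOn y) h f :=
  linear_tlp_discrete_general p hp1 n hn x y hx hy h f
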